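/- arXiv:2004.13206 — 3 statements merged into one kernel-verified Lean document; each statement's English description precedes it below -/
import Mathlib

section
/- Let Γ be a finite connected graph, let f : A(Γ) → ℝ be a nonzero homomorphism with discrete (infinite cyclic) image, and let (Γ₁, Γ₂, Γ₃) be a splitting of Γ. If the restriction of f to A(Γ₃) is identically zero, then ker(f) admits a surjective group homomorphism onto a free group of infinite (countable) rank. -/
/-- The defining relators of the right-angled Artin group of a graph. -/
def raagRels {V : Type*} (Γ : SimpleGraph V) : Set (FreeGroup V) :=
  {r | ∃ v w : V, Γ.Adj v w ∧
    r = FreeGroup.of v * FreeGroup.of w * (FreeGroup.of v)⁻¹ * (FreeGroup.of w)⁻¹}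

/-- The right-angled Artin group of a graph Γ. -/
def RAAG {V : Type*} (Γ : SimpleGraph V) : Type _ := PresentedGroup (raagRels Γ)

noncomputable instance {V : Type*} (Γ : SimpleGraph V) : Group (RAAG Γ) :=
  inferInstanceAs (Group (PresentedGroup (raagRels Γ)))

/-- The generator of `RAAG Γ` corresponding to a vertex. -/
def RAAG.of {V : Type*} {Γ : SimpleGraph V} (v : V) : RAAG Γ := PresentedGroup.of v

/-- A homomorphism `A(Γ) → (ℝ,+)` (encoded as a monoid hom to `Multiplicative ℝ`) is
discrete if its image is an infinite cyclic subgroup of ℝ, i.e. the set of integer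
multiples of some nonzero real number. -/
def IsDiscreteChar {V : Type*} {Γ : SimpleGraph V} (f : RAAG Γ →* Multiplicative ℝ) : Prop :=
  ∃ a : ℝ, a ≠ 0 ∧ (∀ x : RAAG Γ, ∃ n : ℤ, (f x).toAdd = n • a) ∧
    ∃ x : RAAG Γ, (f x).toAdd = a


/-!
Write `F₂` as `F(ℤ) ⋊ ⟨s⟩`, with `s` shifting the basis `(x_j)` of `F(ℤ)`. Since `f` is discrete,
its kernel is the kernel of an integer character `χ`, and `χ` vanishes on `Γ₃`. Every edge lies in
`Γ₁` or in `Γ₂`, so `A(Γ)` maps to `F(ℤ) ⋊ ⟨s⟩` over `χ` by sending the vertices of `Γ₁` into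
`⟨s⟩` and the vertices outside `Γ₁` into a cyclic subgroup: the powers of `x₀ s` if `χ` is
nonzero outside `Γ₁`, and `x₀` if not (when `χ` vanishes on `Γ₁` instead, swap `Γ₁` and `Γ₂`).
The image of `ker χ` then lies in `F(ℤ)` and contains, for some `K > 0` and every `t`,
the block `x_{Kt} ⋯ x_{Kt+K-1}` (resp. the letter `x_{Kt}`). Killing the `x_j` with `K ∤ j` and
renaming `x_{Kt}` to `x_t` maps these onto the basis of `F(ℤ)`.
-/

open SemidirectProduct Multiplicative

namespace ShiftGroup

noncomputable def shiftAut : Multiplicative ℤ →* MulAut (FreeGroup ℤ) :=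
  MonoidHom.mk' (fun k => FreeGroup.freeGroupCongr (Equiv.addRight k.toAdd)) fun a b => by
    apply MulEquiv.toMonoidHom_injective
    refine FreeGroup.ext_hom _ _ fun j => ?_
    simp [MulAut.mul_apply, FreeGroup.freeGroupCongr]
    congr 1
    abel

@[simp]
lemma shiftAut_of (k j : ℤ) : shiftAut (ofAdd k) (FreeGroup.of j) = FreeGroup.of (j + k) := by
  simp [shiftAut, FreeGroup.freeGroupCongr]

abbrev _root_.ShiftGroup := FreeGroup ℤ ⋊[shiftAut] Multiplicative ℤ

noncomputable def block (K : ℕ) (s : ℤ) : FreeGroup ℤ :=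
  ((List.range K).map fun j : ℕ => FreeGroup.of (s + j)).prod

lemma shiftAut_block (K : ℕ) (s k : ℤ) : shiftAut (ofAdd k) (block K s) = block K (s + k) := by
  simp only [block, map_list_prod, List.map_map]
  congr 2
  ext j
  simp only [Function.comp_apply, shiftAut_of, add_right_comm]

lemma block_succ (K : ℕ) (s : ℤ) : block (K + 1) s = block K s * FreeGroup.of (s + K) := by
  simp [block, List.range_succ]

noncomputable def contract (k : ℤ) : FreeGroup ℤ →* FreeGroup ℤ :=
  FreeGroup.lift fun j => if k ∣ j then FreeGroup.of (j / k) else 1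

lemma contract_of_mul {k : ℤ} (hk : k ≠ 0) (t : ℤ) :
    contract k (FreeGroup.of (k * t)) = FreeGroup.of t := by
  simp [contract, Int.mul_ediv_cancel_left t hk]

lemma contract_block {K : ℕ} (hK : 0 < K) (t : ℤ) :
    contract K (block K (K * t)) = FreeGroup.of t := by
  obtain ⟨n, rfl⟩ := Nat.exists_eq_add_one_of_ne_zero hK.ne'
  rw [block, List.range_succ_eq_map, List.map_cons, List.prod_cons, MonoidHom.map_mul,
    Nat.cast_zero, add_zero, contract_of_mul (by omega), map_list_prod, List.prod_eq_one, mul_one]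
  simp only [List.map_map, List.mem_map, List.mem_range, Function.comp_apply, forall_exists_index,
    and_imp]
  rintro _ j hj rfl
  have hndvd : ¬ (n + 1 : ℤ) ∣ j + 1 := fun h => by have := Int.le_of_dvd (by omega) h; omega
  simp [contract, hndvd]

noncomputable def genMulShift : ShiftGroup := inl (FreeGroup.of 0) * inr (ofAdd 1)

lemma genMulShift_pow (K : ℕ) : genMulShift ^ K = inl (block K 0) * inr (ofAdd (K : ℤ)) := by
  induction K with
  | zero => simp [block]
  | succ K ih =>
    rw [pow_succ, ih, genMulShift, block_succ]
    ext <;> simp [add_comm]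

@[simp]
lemma right_genMulShift_zpow (n : ℤ) : (genMulShift ^ n).right = ofAdd n := by
  change rightHom (genMulShift ^ n) = _
  rw [map_zpow, show rightHom genMulShift = ofAdd 1 by simp [genMulShift], ← ofAdd_zsmul,
    smul_eq_mul, mul_one]

lemma inr_zpow (p n : ℤ) : (inr (ofAdd p) : ShiftGroup) ^ n = inr (ofAdd (p * n)) := by
  rw [← map_zpow, ← ofAdd_zsmul, smul_eq_mul, mul_comm]

lemma inr_mul_genMulShift_pow_mul_inr (K : ℕ) (s : ℤ) :
    inr (ofAdd s) * genMulShift ^ K * inr (ofAdd (-s - K)) = inl (block K s) := by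
  rw [genMulShift_pow, mul_assoc, mul_assoc, ← map_mul inr, ← ofAdd_add,
    show (K : ℤ) + (-s - K) = -s by ring, ofAdd_neg, ← mul_assoc, ← inl_aut, shiftAut_block,
    zero_add]

lemma inl_block_mem_closure {p q : ℤ} (t : ℤ) :
    inl (block (p * q).natAbs ((p * q).natAbs * t)) ∈
      Subgroup.closure {inr (ofAdd p), genMulShift ^ q} := by
  set K := (p * q).natAbs
  set s := (p * q).sign
  have hK : p * (q * s) = K := by
    rw [← Int.sign_mul_self_eq_natAbs]
    ring
  have hσ : inr (ofAdd p) ∈ Subgroup.closure {inr (ofAdd p), genMulShift ^ q} :=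
    Subgroup.subset_closure (by simp)
  have hτ : genMulShift ^ q ∈ Subgroup.closure {inr (ofAdd p), genMulShift ^ q} :=
    Subgroup.subset_closure (by simp)
  have hleft : (inr (ofAdd (K * t)) : ShiftGroup) = inr (ofAdd p) ^ (q * s * t) := by
    rw [inr_zpow, ← hK]
    ring_nf
  have hmid : genMulShift ^ K = (genMulShift ^ q) ^ (p * s) := by
    rw [← zpow_mul, ← zpow_natCast, ← hK]
    ring_nf
  have hright :
      (inr (ofAdd (-(K * t) - K)) : ShiftGroup) = inr (ofAdd p) ^ (-(q * s * t) - q * s) := by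
    rw [inr_zpow, ← hK]
    ring_nf
  rw [← inr_mul_genMulShift_pow_mul_inr, hleft, hmid, hright]
  exact Subgroup.mul_mem _ (Subgroup.mul_mem _ (Subgroup.zpow_mem _ hσ _)
    (Subgroup.zpow_mem _ hτ _)) (Subgroup.zpow_mem _ hσ _)

lemma inl_of_mul_mem_closure (p t : ℤ) :
    inl (FreeGroup.of (p * t)) ∈
      Subgroup.closure {inr (ofAdd p), (inl (FreeGroup.of 0) : ShiftGroup)} := by
  have hσ : inr (ofAdd p) ∈
      Subgroup.closure {inr (ofAdd p), (inl (FreeGroup.of 0) : ShiftGroup)} :=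
    Subgroup.subset_closure (by simp)
  have hx₀ : inl (FreeGroup.of 0) ∈
      Subgroup.closure {inr (ofAdd p), (inl (FreeGroup.of 0) : ShiftGroup)} :=
    Subgroup.subset_closure (by simp)
  rw [← zero_add (p * t), ← shiftAut_of, inl_aut, map_inv, ← inr_zpow]
  exact Subgroup.mul_mem _ (Subgroup.mul_mem _ (Subgroup.zpow_mem _ hσ t) hx₀)
    (Subgroup.inv_mem _ (Subgroup.zpow_mem _ hσ t))

theorem exists_surjective_ker_rightHom_comp {G : Type*} [Group G] (g : G →* ShiftGroup)
    (θ : FreeGroup ℤ →* FreeGroup ℤ)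
    (hθ : ∀ t : ℤ, ∃ w, inl w ∈ g.range ∧ θ w = FreeGroup.of t) :
    ∃ φ : (rightHom.comp g).ker →* FreeGroup ℤ, Function.Surjective φ := by
  let φ : (rightHom.comp g).ker →* FreeGroup ℤ :=
    { toFun := fun x => θ (g x).left
      map_one' := by simp
      map_mul' := fun x y => by
        have hx : (g x).right = 1 := x.2
        simp [mul_left, hx] }
  refine ⟨φ, MonoidHom.range_eq_top.mp ?_⟩
  rw [eq_top_iff, ← FreeGroup.closure_range_of, Subgroup.closure_le]
  rintro _ ⟨t, rfl⟩
  obtain ⟨w, ⟨y, hy⟩, hw⟩ := hθ t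
  exact ⟨⟨y, by simp [hy]⟩, by simp [φ, hy, hw]⟩

end ShiftGroup

open ShiftGroup

namespace RAAG

variable {V : Type*} {Γ : SimpleGraph V} {H : Type*} [Group H]

noncomputable def lift (c : V → H) (hc : ∀ a b, Γ.Adj a b → Commute (c a) (c b)) :
    RAAG Γ →* H :=
  PresentedGroup.toGroup (rels := raagRels Γ) (f := c) <| by
    rintro _ ⟨v, w, hvw, rfl⟩
    simp [(hc v w hvw).eq]

@[simp]
lemma lift_of (c : V → H) (hc : ∀ a b, Γ.Adj a b → Commute (c a) (c b)) (v : V) :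
    lift c hc (RAAG.of v) = c v :=
  PresentedGroup.toGroup.of _

lemma hom_ext {φ ψ : RAAG Γ →* H} (h : ∀ v, φ (RAAG.of v) = ψ (RAAG.of v)) : φ = ψ :=
  PresentedGroup.ext h

end RAAG

lemma commute_piecewise_of_adj {V H : Type*} [Group H] {Γ : SimpleGraph V} {S : Set V}
    [DecidablePred (· ∈ S)] {c d : V → H} (hc : ∀ a b, Commute (c a) (c b))
    (hd : ∀ a b, Commute (d a) (d b)) (hS : ∀ a b, Γ.Adj a b → a ∈ S → b ∉ S → c a = 1) :
    ∀ a b, Γ.Adj a b → Commute (S.piecewise c d a) (S.piecewise c d b) := by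
  intro a b hab
  by_cases ha : a ∈ S <;> by_cases hb : b ∈ S <;>
    simp only [ha, hb, Set.piecewise_eq_of_mem, Set.piecewise_eq_of_notMem, not_false_eq_true]
  · exact hc a b
  · simp [hS a b hab ha hb]
  · simp [hS b a hab.symm hb ha]
  · exact hd a b

section IntegerCharacter

variable {V : Type*} {Γ : SimpleGraph V} (χ : RAAG Γ →* Multiplicative ℤ) (S : Set V)

theorem exists_surjective_ker_of_two_sided
    (hS : ∀ a b, Γ.Adj a b → a ∈ S → b ∉ S → χ (RAAG.of a) = 1) {v w : V} (hv : v ∈ S)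
    (hw : w ∉ S) (hχv : χ (RAAG.of v) ≠ 1) (hχw : χ (RAAG.of w) ≠ 1) :
    ∃ φ : χ.ker →* FreeGroup ℤ, Function.Surjective φ := by
  classical
  let u : Multiplicative ℤ →* ShiftGroup := zpowersHom _ genMulShift
  let g := RAAG.lift (S.piecewise (fun x => inr (χ (RAAG.of x))) fun x => u (χ (RAAG.of x)))
    (commute_piecewise_of_adj (fun _ _ => (Commute.all _ _).map inr)
      (fun _ _ => (Commute.all _ _).map u) fun a b hab ha hb => by rw [hS a b hab ha hb, map_one])
  have hg : rightHom.comp g = χ := RAAG.hom_ext fun x => by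
    by_cases hx : x ∈ S <;> simp [g, hx, u]
  have hK : 0 < ((χ (RAAG.of v)).toAdd * (χ (RAAG.of w)).toAdd).natAbs := by
    simpa using And.intro hχv hχw
  rw [← hg]
  refine exists_surjective_ker_rightHom_comp g _ fun t => ⟨_, ?_, contract_block hK t⟩
  refine (Subgroup.closure_le _).mpr ?_ (inl_block_mem_closure t)
  rintro _ (rfl | rfl)
  · exact ⟨RAAG.of v, by simp [g, hv]⟩
  · exact ⟨RAAG.of w, by simp [g, hw, u]⟩

theorem exists_surjective_ker_of_one_sided
    (hS : ∀ a b, Γ.Adj a b → a ∈ S → b ∉ S → χ (RAAG.of a) = 1)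
    (hout : ∀ x ∉ S, χ (RAAG.of x) = 1) (hχ : χ ≠ 1) {v : V} (hv : v ∉ S) :
    ∃ φ : χ.ker →* FreeGroup ℤ, Function.Surjective φ := by
  classical
  obtain ⟨w, hw⟩ : ∃ w, χ (RAAG.of w) ≠ 1 := by
    by_contra! h
    exact hχ (RAAG.hom_ext h)
  have hwS : w ∈ S := by_contra fun h => hw (hout w h)
  let g : RAAG Γ →* ShiftGroup :=
    RAAG.lift (S.piecewise (fun x => inr (χ (RAAG.of x))) fun _ => inl (FreeGroup.of 0))
    (commute_piecewise_of_adj (fun _ _ => (Commute.all _ _).map inr) (fun _ _ => Commute.refl _)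
      fun a b hab ha hb => by rw [hS a b hab ha hb, map_one])
  have hg : rightHom.comp g = χ := RAAG.hom_ext fun x => by
    by_cases hx : x ∈ S <;> simp [g, hx, hout]
  have hp : (χ (RAAG.of w)).toAdd ≠ 0 := by simpa using hw
  rw [← hg]
  refine exists_surjective_ker_rightHom_comp g _ fun t => ⟨_, ?_, contract_of_mul hp t⟩
  refine (Subgroup.closure_le _).mpr ?_ (inl_of_mul_mem_closure _ t)
  rintro _ (rfl | rfl)
  · exact ⟨RAAG.of w, by simp [g, hwS]⟩
  · exact ⟨RAAG.of v, by simp [g, hv]⟩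

lemma mem_inter_of_adj_of_notMem {S₁ S₂ : Set V}
    (hedges : ∀ a b, Γ.Adj a b → (a ∈ S₁ ∧ b ∈ S₁) ∨ (a ∈ S₂ ∧ b ∈ S₂)) {a b : V}
    (hab : Γ.Adj a b) (ha : a ∈ S₁) (hb : b ∉ S₁) : a ∈ S₁ ∩ S₂ := by
  rcases hedges a b hab with h | h
  exacts [absurd h.2 hb, ⟨ha, h.1⟩]

theorem exists_surjective_ker_of_splitting (hχ : χ ≠ 1) {S₁ S₂ : Set V} (h₁ : ¬S₁ ⊆ S₂)
    (h₂ : ¬S₂ ⊆ S₁) (hcover : S₁ ∪ S₂ = Set.univ)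
    (hedges : ∀ a b, Γ.Adj a b → (a ∈ S₁ ∧ b ∈ S₁) ∨ (a ∈ S₂ ∧ b ∈ S₂))
    (hvanish : ∀ v ∈ S₁ ∩ S₂, χ (RAAG.of v) = 1) :
    ∃ φ : χ.ker →* FreeGroup ℤ, Function.Surjective φ := by
  have hS₁ : ∀ a b, Γ.Adj a b → a ∈ S₁ → b ∉ S₁ → χ (RAAG.of a) = 1 := fun a b hab ha hb =>
    hvanish a (mem_inter_of_adj_of_notMem hedges hab ha hb)
  have hS₂ : ∀ a b, Γ.Adj a b → a ∈ S₂ → b ∉ S₂ → χ (RAAG.of a) = 1 := fun a b hab ha hb =>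
    hvanish a (Set.inter_comm S₂ S₁ ▸
      mem_inter_of_adj_of_notMem (fun a b h => (hedges a b h).symm) hab ha hb)
  obtain ⟨v₁, -, hv₁⟩ := Set.not_subset.mp h₁
  obtain ⟨v₂, -, hv₂⟩ := Set.not_subset.mp h₂
  by_cases hout : ∀ x ∉ S₁, χ (RAAG.of x) = 1
  · exact exists_surjective_ker_of_one_sided χ S₁ hS₁ hout hχ hv₂
  obtain ⟨w, hw, hχw⟩ := not_forall₂.mp hout
  by_cases hin : ∀ x ∈ S₁, χ (RAAG.of x) = 1
  · refine exists_surjective_ker_of_one_sided χ S₂ hS₂ (fun x hx => hin x ?_) hχ hv₁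
    exact (Set.eq_univ_iff_forall.mp hcover x).resolve_right hx
  obtain ⟨v, hv, hχv⟩ := not_forall₂.mp hin
  exact exists_surjective_ker_of_two_sided χ S₁ hS₁ hv hw hχv hχw

end IntegerCharacter

theorem exists_ker_eq_of_forall_zsmul {G : Type*} [Group G] (f : G →* Multiplicative ℝ) {α : ℝ}
    (hα : α ≠ 0) (h : ∀ x, ∃ n : ℤ, (f x).toAdd = n • α) :
    ∃ χ : G →* Multiplicative ℤ, f.ker = χ.ker := by
  let ι : Multiplicative ℤ →* Multiplicative ℝ := (zmultiplesHom ℝ α).toMultiplicative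
  have hι : Function.Injective ι := fun m n hmn => by simpa [ι, hα] using hmn
  have hrange : ∀ x, f x ∈ ι.range := fun x => by
    obtain ⟨n, hn⟩ := h x
    exact ⟨ofAdd n, by simp [ι, ← hn]⟩
  refine ⟨(MonoidHom.ofInjective hι).symm.toMonoidHom.comp (f.codRestrict _ hrange), ?_⟩
  rw [← MonoidHom.ker_comp_of_injective _ ι hι]
  congr 1
  ext x
  simp

theorem stmt_7_general {V : Type*} (Γ : SimpleGraph V)
    (f : RAAG Γ →* Multiplicative ℝ) (hf0 : f ≠ 1) (hdisc : IsDiscreteChar f)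
    (S₁ S₂ S₃ : Set V)
    (hd13 : S₁ ≠ S₃) (hd23 : S₂ ≠ S₃)
    (hcover : S₁ ∪ S₂ = Set.univ) (hmeet : S₁ ∩ S₂ = S₃)
    (hedges : ∀ a b : V, Γ.Adj a b → (a ∈ S₁ ∧ b ∈ S₁) ∨ (a ∈ S₂ ∧ b ∈ S₂))
    (hvanish : ∀ v ∈ S₃, f (RAAG.of v) = 1) :
    ∃ φ : f.ker →* FreeGroup ℕ, Function.Surjective φ := by
  subst hmeet
  obtain ⟨α, hα, hmul, -⟩ := hdisc
  obtain ⟨χ, hker⟩ := exists_ker_eq_of_forall_zsmul f hα hmul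
  have hχ : χ ≠ 1 := fun h => hf0 <| by rw [← MonoidHom.ker_eq_top_iff, hker, h, MonoidHom.ker_one]
  obtain ⟨φ, hφ⟩ := exists_surjective_ker_of_splitting χ hχ
    (fun h => hd13 (Set.inter_eq_left.mpr h).symm) (fun h => hd23 (Set.inter_eq_right.mpr h).symm)
    hcover hedges fun v hv => by rw [← MonoidHom.mem_ker, ← hker]; exact hvanish v hv
  rw [hker]
  exact ⟨(FreeGroup.freeGroupCongr (Denumerable.eqv ℤ)).toMonoidHom.comp φ,
    (FreeGroup.freeGroupCongr (Denumerable.eqv ℤ)).surjective.comp hφ⟩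

/-- Let Γ be a finite connected graph, f : A(Γ) → ℝ a nonzero homomorphism with
discrete image, and (Γ₁, Γ₂, Γ₃) a splitting of Γ (full subgraphs encoded by their vertex
sets). If f vanishes identically on A(Γ₃) (equivalently, on the generators coming from S₃),
then ker(f) surjects onto a free group of countably infinite rank. -/
theorem stmt_7 {V : Type*} [Fintype V] (Γ : SimpleGraph V) (hconn : Γ.Connected)
    (f : RAAG Γ →* Multiplicative ℝ) (hf0 : f ≠ 1) (hdisc : IsDiscreteChar f)
    (S₁ S₂ S₃ : Set V)
    (hne1 : S₁.Nonempty) (hne2 : S₂.Nonempty) (hne3 : S₃.Nonempty)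
    (hd12 : S₁ ≠ S₂) (hd13 : S₁ ≠ S₃) (hd23 : S₂ ≠ S₃)
    (hcover : S₁ ∪ S₂ = Set.univ) (hmeet : S₁ ∩ S₂ = S₃)
    (hedges : ∀ a b : V, Γ.Adj a b → (a ∈ S₁ ∧ b ∈ S₁) ∨ (a ∈ S₂ ∧ b ∈ S₂))
    (hvanish : ∀ v ∈ S₃, f (RAAG.of v) = 1) :
    ∃ φ : f.ker →* FreeGroup ℕ, Function.Surjective φ :=
  stmt_7_general Γ f hf0 hdisc S₁ S₂ S₃ hd13 hd23 hcover hmeet hedges hvanish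
end

section
/- Let Γ be a finite connected graph, (Γ₁, Γ₂, Γ₃) a splitting of Γ with Γ₃ connected, and f : A(Γ) → ℝ a discrete character such that the living subgraph L(f) is connected and dominating in Γ, and the living subgraph L(f₃) = L(f) ∩ Γ₃ is connected and dominating in Γ₃. Then for k = 1, 2, the living subgraph L(f_k) = L(f) ∩ Γ_k is connected and dominating in Γ_k. -/
lemma raag_aux {V : Type*} (Γ : SimpleGraph V) (L S₁ S₂ : Set V)
    (hedges : ∀ a b : V, Γ.Adj a b → (a ∈ S₁ ∧ b ∈ S₁) ∨ (a ∈ S₂ ∧ b ∈ S₂))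
    (hLconn : (Γ.induce L).Connected)
    (hLdom : ∀ v : V, ∃ w ∈ L, Γ.Adj v w)
    (hL3conn : (Γ.induce (L ∩ (S₁ ∩ S₂))).Connected)
    (hL3dom : ∀ v ∈ S₁ ∩ S₂, ∃ w ∈ L ∩ (S₁ ∩ S₂), Γ.Adj v w) :
    (Γ.induce (L ∩ S₁)).Connected ∧ ∀ v ∈ S₁, ∃ w ∈ L ∩ S₁, Γ.Adj v w := by
  have subs : L ∩ (S₁ ∩ S₂) ⊆ L ∩ S₁ := fun a ha => ⟨ha.1, ha.2.1⟩
  have hreach3 : ∀ (a b : V) (ha : a ∈ L ∩ (S₁ ∩ S₂)) (hb : b ∈ L ∩ (S₁ ∩ S₂)),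
      (Γ.induce (L ∩ S₁)).Reachable ⟨a, subs ha⟩ ⟨b, subs hb⟩ := by
    intro a b ha hb
    exact (hL3conn.preconnected ⟨a, ha⟩ ⟨b, hb⟩).map
      (⟨fun x => ⟨x.1, subs x.2⟩, fun h => h⟩ :
        Γ.induce (L ∩ (S₁ ∩ S₂)) →g Γ.induce (L ∩ S₁))
  have key : ∀ (x y : ↥L), (Γ.induce L).Walk x y → y.1 ∈ S₁ →
      ((x.1 ∈ S₁ → ∃ hx : x.1 ∈ L ∩ S₁, ∃ hy : y.1 ∈ L ∩ S₁,
          (Γ.induce (L ∩ S₁)).Reachable ⟨x.1, hx⟩ ⟨y.1, hy⟩) ∧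
       (x.1 ∉ S₁ → ∃ z : V, ∃ hz : z ∈ L ∩ (S₁ ∩ S₂), ∃ hy : y.1 ∈ L ∩ S₁,
          (Γ.induce (L ∩ S₁)).Reachable ⟨z, subs hz⟩ ⟨y.1, hy⟩)) := by
    intro x y w
    induction w with
    | @nil u =>
      intro hy
      exact ⟨fun hx => ⟨⟨u.2, hx⟩, ⟨u.2, hy⟩, SimpleGraph.Reachable.refl _⟩,
        fun hx => absurd hy hx⟩
    | @cons u v y h p ih =>
      intro hy
      have ih' := ih hy
      have hadj : Γ.Adj u.1 v.1 := h
      constructor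
      · intro hu
        by_cases hv : v.1 ∈ S₁
        · obtain ⟨h1, h2, r⟩ := ih'.1 hv
          refine ⟨⟨u.2, hu⟩, h2, SimpleGraph.Reachable.trans ?_ r⟩
          exact SimpleGraph.Adj.reachable
            (show (Γ.induce (L ∩ S₁)).Adj ⟨u.1, ⟨u.2, hu⟩⟩ ⟨v.1, h1⟩ from hadj)
        · have hu2 : u.1 ∈ S₂ := by
            rcases hedges u.1 v.1 hadj with ⟨_, hv1⟩ | ⟨h2, _⟩
            · exact absurd hv1 hv
            · exact h2
          have hu3 : u.1 ∈ L ∩ (S₁ ∩ S₂) := ⟨u.2, hu, hu2⟩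
          obtain ⟨z, hz, hyy, r⟩ := ih'.2 hv
          exact ⟨⟨u.2, hu⟩, hyy, (hreach3 u.1 z hu3 hz).trans r⟩
      · intro hu
        by_cases hv : v.1 ∈ S₁
        · have hv2 : v.1 ∈ S₂ := by
            rcases hedges u.1 v.1 hadj with ⟨h1, _⟩ | ⟨_, h2⟩
            · exact absurd h1 hu
            · exact h2
          obtain ⟨h1, h2, r⟩ := ih'.1 hv
          exact ⟨v.1, ⟨v.2, hv, hv2⟩, h2, r⟩
        · obtain ⟨z, hz, hyy, r⟩ := ih'.2 hv
          exact ⟨z, hz, hyy, r⟩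
  constructor
  · have hne : Nonempty ↥(L ∩ S₁) := by
      obtain ⟨⟨a, ha⟩⟩ := hL3conn.nonempty
      exact ⟨⟨a, subs ha⟩⟩
    haveI := hne
    refine SimpleGraph.Connected.mk fun a b => ?_
    obtain ⟨w⟩ := hLconn.preconnected ⟨a.1, a.2.1⟩ ⟨b.1, b.2.1⟩
    obtain ⟨h1, h2, r⟩ := (key _ _ w b.2.2).1 a.2.2
    exact r
  · intro v hv
    obtain ⟨w, hw, hadj⟩ := hLdom v
    rcases hedges v w hadj with ⟨_, hw1⟩ | ⟨hv2, _⟩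
    · exact ⟨w, ⟨hw, hw1⟩, hadj⟩
    · obtain ⟨w', hw', hadj'⟩ := hL3dom v ⟨hv, hv2⟩
      exact ⟨w', ⟨hw'.1, hw'.2.1⟩, hadj'⟩

/-- Let Γ be a finite connected graph, (Γ₁, Γ₂, Γ₃) a splitting of Γ with Γ₃
connected (subgraphs encoded by vertex sets S₁, S₂, S₃), and f a discrete character whose
living subgraph L(f) = {v : f(v) ≠ 0} is connected and dominating in Γ, and such that
L(f₃) = L(f) ∩ Γ₃ is connected and dominating in Γ₃. Then for k = 1,2 the living subgraph
L(f_k) = L(f) ∩ Γ_k is connected and dominating in Γ_k. -/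
theorem stmt_10 {V : Type*} [Fintype V] (Γ : SimpleGraph V) (hconn : Γ.Connected)
    (S₁ S₂ S₃ : Set V)
    (hne1 : S₁.Nonempty) (hne2 : S₂.Nonempty) (hne3 : S₃.Nonempty)
    (hd12 : S₁ ≠ S₂) (hd13 : S₁ ≠ S₃) (hd23 : S₂ ≠ S₃)
    (hcover : S₁ ∪ S₂ = Set.univ) (hmeet : S₁ ∩ S₂ = S₃)
    (hedges : ∀ a b : V, Γ.Adj a b → (a ∈ S₁ ∧ b ∈ S₁) ∨ (a ∈ S₂ ∧ b ∈ S₂))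
    (hS₃conn : (Γ.induce S₃).Connected)
    (f : RAAG Γ →* Multiplicative ℝ) (hdisc : IsDiscreteChar f)
    (L : Set V) (hL : L = {v : V | f (RAAG.of v) ≠ 1})
    (hLconn : (Γ.induce L).Connected)
    (hLdom : ∀ v : V, ∃ w ∈ L, Γ.Adj v w)
    (hL3conn : (Γ.induce (L ∩ S₃)).Connected)
    (hL3dom : ∀ v ∈ S₃, ∃ w ∈ L ∩ S₃, Γ.Adj v w) :
    ((Γ.induce (L ∩ S₁)).Connected ∧ ∀ v ∈ S₁, ∃ w ∈ L ∩ S₁, Γ.Adj v w) ∧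
    ((Γ.induce (L ∩ S₂)).Connected ∧ ∀ v ∈ S₂, ∃ w ∈ L ∩ S₂, Γ.Adj v w) := by
  subst hmeet
  refine ⟨raag_aux Γ L S₁ S₂ hedges hLconn hLdom hL3conn hL3dom,
    raag_aux Γ L S₂ S₁ (fun a b h => (hedges a b h).symm) hLconn hLdom ?_ ?_⟩
  · rwa [Set.inter_comm S₂ S₁]
  · rwa [Set.inter_comm S₂ S₁]
end

section
/- Let Γ be a finite connected graph with blocks Bl(Γ), let f : V(Γ) → ℤ be a function nonzero on each cut vertex, let I_Γ = [ℤ : f(A(Γ))] (the positive gcd of the values f(v)), and for each block B let I_{Γ,B} = [f(A(Γ)) : f(A(B))]. Suppose Γ = Λ ∪ B₀ where B₀ is a block containing a unique cut vertex v₀ and Λ is the union of the other blocks, with Λ ∩ B₀ = {v₀}. Then the quantity m(Γ, f) = 1 − Σ_{B ∈ Bl(Γ)} I_{Γ,B} + Σ_{v ∈ V(Γ)} (bldeg_Γ(v) − 1)·|f(v)|/I_Γ satisfies m(Γ, f) = b₁ + I_{Γ,Λ}·m(Λ, f), where b₁ = 1 − (I_{Γ,Λ} + I_{Γ,B₀})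 + |f(v₀)|/I_Γ. -/
/-- A set of vertices is biconnected if it induces a connected subgraph which stays
(pre)connected after the removal of any one of its vertices (i.e. it has no cut vertex). -/
def Biconnected {V : Type*} (Γ : SimpleGraph V) (B : Set V) : Prop :=
  (Γ.induce B).Connected ∧ ∀ v ∈ B, (Γ.induce (B \ {v})).Preconnected

/-- A block of Γ is a maximal biconnected set of vertices (a maximal biconnected full
subgraph). -/
def IsBlock {V : Type*} (Γ : SimpleGraph V) (B : Set V) : Prop :=
  Biconnected Γ B ∧ ∀ C : Set V, B ⊆ C → Biconnected Γ C → B = C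

/-- A cut vertex is a vertex whose removal disconnects the graph. -/
def IsCutVertex {V : Type*} (Γ : SimpleGraph V) (v : V) : Prop :=
  ¬ (Γ.induce ({v}ᶜ : Set V)).Preconnected

/-- The subgroup of ℤ generated by the values of `f` on `S` (i.e. `f(A(Δ))` for the full
subgraph Δ on `S`). -/
def valGrp {W : Type*} (f : W → ℤ) (S : Set W) : AddSubgroup ℤ :=
  AddSubgroup.closure (f '' S)

/-- `I_Γ = [ℤ : f(A(Γ))]`. -/
noncomputable def Ienv {W : Type*} (f : W → ℤ) : ℕ := (valGrp f Set.univ).index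

/-- `I_{Γ,Δ} = [f(A(Γ)) : f(A(Δ))]`, the relative index. -/
noncomputable def Irel {W : Type*} (f : W → ℤ) (S : Set W) : ℕ :=
  (valGrp f S).relIndex (valGrp f Set.univ)

/-- The block degree of a vertex: the number of blocks containing it. -/
noncomputable def bldeg {W : Type*} (Γ : SimpleGraph W) (v : W) : ℕ :=
  Set.ncard {B : Set W | IsBlock Γ B ∧ v ∈ B}

/-- The quantity
`m(Γ,f) = 1 − Σ_{B ∈ Bl(Γ)} I_{Γ,B} + Σ_{v ∈ V(Γ)} (bldeg_Γ(v) − 1)·|f(v)|/I_Γ`. -/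
noncomputable def mval {W : Type*} (Γ : SimpleGraph W) (f : W → ℤ) : ℝ :=
  1 - (∑ᶠ B ∈ {B : Set W | IsBlock Γ B}, (Irel f B : ℝ))
    + ∑ᶠ v : W, ((bldeg Γ v : ℝ) - 1) * |(f v : ℝ)| / (Ienv f : ℝ)


/-!
Deleting the leaf block `B₀` changes the block structure only locally. The blocks of `Γ` other
than `B₀` are exactly the blocks of `Γ.induce Λ`: a block of `Γ.induce Λ` lies in a block of `Γ`,
which cannot be `B₀` since `{v₀}` is not a block of `Γ.induce Λ` (`v₀` has a neighbour in `Λ`).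
Hence block degrees agree on `Λ` except at `v₀`, where the block `B₀` is lost, and the vertices of
`B₀ \ {v₀}` have block degree one. Indices multiply along `f(A(B)) ≤ f(A(Λ)) ≤ f(A(Γ))`, so
`I_{Γ,Λ}` times each term of `m(Λ, f)` is the matching term of `m(Γ, f)`; the block term of `B₀`
and the extra `|f v₀| / I_Γ` are what is left, and they make up `b₁`.
-/

open Set

theorem AddSubgroup.eq_zero_of_mem_of_index_eq_zero {H : AddSubgroup ℤ} {n : ℤ} (hn : n ∈ H)
    (h : H.index = 0) : n = 0 := by
  have := AddSubgroup.index_dvd_of_le (AddSubgroup.zmultiples_le_of_mem hn)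
  rwa [Int.index_zmultiples, h, zero_dvd_iff, Int.natAbs_eq_zero] at this

theorem AddSubgroup.relIndex_mul_div_index {H K : AddSubgroup ℤ} (hHK : H ≤ K) {n : ℤ}
    (hn : n ∈ H) (c : ℝ) :
    (H.relIndex K : ℝ) * (c * |(n : ℝ)| / H.index) = c * |(n : ℝ)| / K.index := by
  rcases eq_or_ne H.index 0 with h | h
  -- both divisions are by zero here, but so is `n`
  · simp [eq_zero_of_mem_of_index_eq_zero hn h]
  · rw [← relIndex_mul_index hHK] at h ⊢
    obtain ⟨hrel, hK⟩ := mul_ne_zero_iff.mp h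
    push_cast
    field_simp

section ValueGroup

variable {W : Type*} (f : W → ℤ)

theorem valGrp_mono {S T : Set W} (h : S ⊆ T) : valGrp f S ≤ valGrp f T :=
  AddSubgroup.closure_mono (image_mono h)

theorem valGrp_restrict (S : Set W) (T : Set S) :
    valGrp (fun w : S => f w) T = valGrp f (Subtype.val '' T) := by
  rw [valGrp, valGrp, image_image]

theorem valGrp_restrict_univ (S : Set W) : valGrp (fun w : S => f w) univ = valGrp f S := by
  rw [valGrp_restrict, image_univ, Subtype.range_coe]

theorem Irel_restrict_mul {S T : Set W} (hTS : T ⊆ S) :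
    Irel (fun w : S => f w) (Subtype.val ⁻¹' T) * Irel f S = Irel f T := by
  rw [Irel, Irel, valGrp_restrict, valGrp_restrict_univ, Subtype.image_preimage_coe,
    inter_eq_self_of_subset_right hTS]
  exact AddSubgroup.relIndex_mul_relIndex _ _ _ (valGrp_mono f hTS) (valGrp_mono f (subset_univ S))

theorem Irel_mul_div_Ienv_restrict {S : Set W} {x : W} (hx : x ∈ S) (c : ℝ) :
    (Irel f S : ℝ) * (c * |(f x : ℝ)| / Ienv (fun w : S => f w)) = c * |(f x : ℝ)| / Ienv f := by
  rw [Ienv, valGrp_restrict_univ]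
  exact AddSubgroup.relIndex_mul_div_index (valGrp_mono f (subset_univ S))
    (AddSubgroup.subset_closure (mem_image_of_mem f hx)) c

end ValueGroup

open SimpleGraph

section Graph

variable {V : Type*} {Γ : SimpleGraph V}

noncomputable def induceInduceIso (Λ : Set V) (S : Set Λ) :
    (Γ.induce Λ).induce S ≃g Γ.induce (Subtype.val '' S) where
  toEquiv := Equiv.Set.image Subtype.val S Subtype.val_injective
  map_rel_iff' := by
    rintro ⟨⟨a, ha⟩, ha'⟩ ⟨⟨b, hb⟩, hb'⟩
    simp [Equiv.Set.image, Equiv.Set.imageOfInjOn]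

theorem biconnected_induce_iff {Λ : Set V} {S : Set Λ} :
    Biconnected (Γ.induce Λ) S ↔ Biconnected Γ (Subtype.val '' S) := by
  have hdiff (w : Λ) : Subtype.val '' (S \ {w}) = Subtype.val '' S \ {w.1} := by
    rw [image_sdiff Subtype.val_injective, image_singleton]
  refine (induceInduceIso Λ S).connected_iff.and ⟨fun h v hv => ?_, fun h w hw => ?_⟩
  · obtain ⟨w, hw, rfl⟩ := hv
    exact hdiff w ▸ (induceInduceIso Λ (S \ {w})).preconnected_iff.mp (h w hw)
  · exact (induceInduceIso Λ (S \ {w})).preconnected_iff.mpr (hdiff w ▸ h w ⟨w, hw, rfl⟩)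

theorem Biconnected.induce_preimage {Λ B : Set V} (hB : Biconnected Γ B) (hBΛ : B ⊆ Λ) :
    Biconnected (Γ.induce Λ) (Subtype.val ⁻¹' B) := by
  rwa [biconnected_induce_iff, Subtype.image_preimage_coe, inter_eq_self_of_subset_right hBΛ]

theorem preconnected_induce_of_subsingleton {S : Set V} (hS : S.Subsingleton) :
    (Γ.induce S).Preconnected :=
  have := hS.coe_sort
  Preconnected.of_subsingleton

theorem biconnected_singleton (v : V) : Biconnected Γ {v} :=
  have : Nonempty ({v} : Set V) := ⟨⟨v, rfl⟩⟩
  ⟨⟨preconnected_induce_of_subsingleton subsingleton_singleton⟩,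
    fun _ _ => preconnected_induce_of_subsingleton (subsingleton_singleton.anti sdiff_subset)⟩

theorem biconnected_pair {u v : V} (huv : Γ.Adj u v) : Biconnected Γ {u, v} := by
  refine ⟨induce_pair_connected_of_adj huv, fun w hw => preconnected_induce_of_subsingleton ?_⟩
  rcases hw with rfl | rfl
  · exact subsingleton_singleton.anti (sdiff_singleton_subset_iff.mpr subset_rfl)
  · exact subsingleton_singleton.anti (sdiff_singleton_subset_iff.mpr (pair_comm _ _).subset)

theorem exists_isBlock_superset [Finite V] {S : Set V} (h : Biconnected Γ S) :
    ∃ B, IsBlock Γ B ∧ S ⊆ B := by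
  obtain ⟨B, ⟨hSB, hB⟩, hmax⟩ :=
    (toFinite {C : Set V | S ⊆ C ∧ Biconnected Γ C}).exists_maximalFor id _ ⟨S, subset_rfl, h⟩
  exact ⟨B, ⟨hB, fun C hBC hC => hBC.antisymm (hmax ⟨hSB.trans hBC, hC⟩ hBC)⟩, hSB⟩

theorem IsBlock.ne_singleton_of_adj {B : Set V} (hB : IsBlock Γ B) {u v : V} (huv : Γ.Adj u v) :
    B ≠ {u} := by
  rintro rfl
  have := hB.2 _ (singleton_subset_iff.mpr (mem_insert u {v})) (biconnected_pair huv)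
  exact huv.ne (this ▸ mem_insert_of_mem u rfl : v ∈ ({u} : Set V)).symm

theorem IsBlock.exists_adj {B : Set V} (hB : IsBlock Γ B) {u v : V} (hu : u ∈ B) (hv : v ∈ B)
    (huv : u ≠ v) : ∃ w ∈ B, Γ.Adj u w := by
  obtain ⟨p⟩ := hB.1.1.preconnected ⟨u, hu⟩ ⟨v, hv⟩
  cases p with
  | nil => exact absurd rfl huv
  | cons h _ => exact ⟨_, Subtype.prop _, h⟩

theorem IsBlock.induce_preimage {Λ B : Set V} (hB : IsBlock Γ B) (hBΛ : B ⊆ Λ) :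
    IsBlock (Γ.induce Λ) (Subtype.val ⁻¹' B) := by
  refine ⟨Biconnected.induce_preimage hB.1 hBΛ, fun C hBC hC => ?_⟩
  have hB_img : Subtype.val '' (Subtype.val ⁻¹' B : Set Λ) = B := by
    rw [Subtype.image_preimage_coe, inter_eq_self_of_subset_right hBΛ]
  have := hB.2 _ (hB_img ▸ image_mono hBC) (biconnected_induce_iff.mp hC)
  rw [this, preimage_image_eq C Subtype.val_injective]

theorem IsBlock.image_eq_of_subset {Λ D : Set V} {B : Set Λ} (hB : IsBlock (Γ.induce Λ) B)
    (hD : IsBlock Γ D) (hDΛ : D ⊆ Λ) (hBD : Subtype.val '' B ⊆ D) : Subtype.val '' B = D := by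
  have := hB.2 _ (image_subset_iff.mp hBD) (Biconnected.induce_preimage hD.1 hDΛ)
  rw [this, Subtype.image_preimage_coe, inter_eq_self_of_subset_right hDΛ]

structure IsLeafBlockSplit (Γ : SimpleGraph V) (Λ B₀ : Set V) (v₀ : V) : Prop where
  isBlock : IsBlock Γ B₀
  eq_sUnion : Λ = ⋃₀ {B | IsBlock Γ B ∧ B ≠ B₀}
  inter_eq : Λ ∩ B₀ = {v₀}

namespace IsLeafBlockSplit

variable {Λ B₀ : Set V} {v₀ : V} (h : IsLeafBlockSplit Γ Λ B₀ v₀)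
include h

theorem v₀_mem_inter : v₀ ∈ Λ ∩ B₀ := h.inter_eq ▸ mem_singleton v₀

theorem eq_of_mem_of_mem {v : V} (hvΛ : v ∈ Λ) (hvB : v ∈ B₀) : v = v₀ :=
  mem_singleton_iff.mp (h.inter_eq ▸ ⟨hvΛ, hvB⟩)

theorem subset_left {B : Set V} (hB : IsBlock Γ B) (hne : B ≠ B₀) : B ⊆ Λ :=
  h.eq_sUnion ▸ subset_sUnion_of_mem ⟨hB, hne⟩

theorem exists_adj_v₀ : ∃ w ∈ Λ, Γ.Adj v₀ w := by
  obtain ⟨B, ⟨hB, hne⟩, hv₀B⟩ := h.eq_sUnion ▸ h.v₀_mem_inter.1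
  obtain ⟨u, huB, hu⟩ : ∃ u ∈ B, u ≠ v₀ := by
    by_contra! hB_eq
    refine hne (hB.2 _ ?_ h.isBlock.1)
    exact fun u hu => hB_eq u hu ▸ h.v₀_mem_inter.2
  obtain ⟨w, hwB, hadj⟩ := hB.exists_adj hv₀B huB hu.symm
  exact ⟨w, h.subset_left hB hne hwB, hadj⟩

theorem image_not_subset_singleton {B : Set Λ} (hB : IsBlock (Γ.induce Λ) B) :
    ¬ Subtype.val '' B ⊆ {v₀} := by
  intro hsub
  obtain ⟨w, hwΛ, hadj⟩ := h.exists_adj_v₀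
  have hB_ne : B.Nonempty := nonempty_coe_sort.mp hB.1.1.nonempty
  refine hB.ne_singleton_of_adj (u := ⟨v₀, h.v₀_mem_inter.1⟩) (v := ⟨w, hwΛ⟩) hadj ?_
  exact (hB_ne.subset_singleton_iff).mp fun z hz => Subtype.ext (hsub ⟨z, hz, rfl⟩)

theorem isBlock_image [Finite V] {B : Set Λ} (hB : IsBlock (Γ.induce Λ) B) :
    IsBlock Γ (Subtype.val '' B) ∧ Subtype.val '' B ≠ B₀ := by
  obtain ⟨D, hD, hBD⟩ := exists_isBlock_superset (biconnected_induce_iff.mp hB.1)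
  have hDB₀ : D ≠ B₀ := by
    rintro rfl
    exact h.image_not_subset_singleton hB
      (h.inter_eq ▸ subset_inter (Subtype.coe_image_subset Λ B) hBD)
  rw [hB.image_eq_of_subset hD (h.subset_left hD hDB₀) hBD]
  exact ⟨hD, hDB₀⟩

theorem bijOn_preimage_blocks [Finite V] :
    BijOn (fun B : Set V => (Subtype.val ⁻¹' B : Set Λ)) {B | IsBlock Γ B ∧ B ≠ B₀}
      {B | IsBlock (Γ.induce Λ) B} := by
  refine ⟨fun B ⟨hB, hne⟩ => hB.induce_preimage (h.subset_left hB hne), ?_, ?_⟩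
  · rintro B ⟨hB, hBne⟩ C ⟨hC, hCne⟩ hBC
    rw [← inter_eq_self_of_subset_right (h.subset_left hB hBne),
      ← inter_eq_self_of_subset_right (h.subset_left hC hCne), ← Subtype.image_preimage_coe,
      ← Subtype.image_preimage_coe]
    exact congrArg _ hBC
  · exact fun B hB => ⟨_, h.isBlock_image hB, preimage_image_eq B Subtype.val_injective⟩

theorem bldeg_induce [Finite V] (w : Λ) :
    bldeg (Γ.induce Λ) w = {B | (IsBlock Γ B ∧ B ≠ B₀) ∧ w.1 ∈ B}.ncard := by
  refine (ncard_congr (fun B _ => Subtype.val ⁻¹' B) ?_ ?_ ?_).symm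
  · exact fun B hB => ⟨h.bijOn_preimage_blocks.mapsTo hB.1, hB.2⟩
  · exact fun B C hB hC => h.bijOn_preimage_blocks.injOn hB.1 hC.1
  · rintro B' ⟨hB', hw⟩
    obtain ⟨B, hB, rfl⟩ := h.bijOn_preimage_blocks.surjOn hB'
    exact ⟨B, ⟨hB, hw⟩, rfl⟩

theorem bldeg_eq_of_ne [Finite V] {w : Λ} (hw : (w : V) ≠ v₀) :
    bldeg Γ w = bldeg (Γ.induce Λ) w := by
  rw [h.bldeg_induce, bldeg]
  congr 1
  ext B
  refine ⟨fun ⟨hB, hwB⟩ => ⟨⟨hB, ?_⟩, hwB⟩, fun ⟨⟨hB, _⟩, hwB⟩ => ⟨hB, hwB⟩⟩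
  rintro rfl
  exact hw (h.eq_of_mem_of_mem w.2 hwB)

theorem bldeg_v₀ [Finite V] : bldeg Γ v₀ = bldeg (Γ.induce Λ) ⟨v₀, h.v₀_mem_inter.1⟩ + 1 := by
  rw [h.bldeg_induce, bldeg, ← ncard_insert_of_notMem (fun hB => hB.1.2 rfl) (toFinite _)]
  congr 1
  ext B
  by_cases hB : B = B₀
  · simp [hB, h.isBlock, h.v₀_mem_inter.2]
  · simp [hB]

theorem bldeg_eq_one [Finite V] {v : V} (hv : v ∉ Λ) : bldeg Γ v = 1 := by
  have hB₀ : ∀ B, IsBlock Γ B → v ∈ B → B = B₀ := fun B hB hvB =>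
    by_contra fun hne => hv (h.subset_left hB hne hvB)
  obtain ⟨D, hD, hvD⟩ := exists_isBlock_superset (biconnected_singleton (Γ := Γ) v)
  have hblocks : {B | IsBlock Γ B ∧ v ∈ B} = {B₀} := by
    ext B
    refine ⟨fun ⟨hB, hvB⟩ => hB₀ B hB hvB, ?_⟩
    rintro rfl
    exact ⟨h.isBlock, hB₀ D hD (hvD rfl) ▸ hvD rfl⟩
  rw [bldeg, hblocks, ncard_singleton]

theorem finsum_Irel_blocks [Finite V] (f : V → ℤ) :
    ∑ᶠ B ∈ {B : Set V | IsBlock Γ B}, (Irel f B : ℝ) = Irel f B₀ +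
      Irel f Λ * ∑ᶠ B ∈ {B : Set Λ | IsBlock (Γ.induce Λ) B}, (Irel (fun w : Λ => f w) B : ℝ) := by
  have hsplit : {B | IsBlock Γ B} = insert B₀ {B | IsBlock Γ B ∧ B ≠ B₀} := by
    ext B
    by_cases hB : B = B₀ <;> simp [hB, h.isBlock]
  rw [hsplit, finsum_mem_insert _ (fun hB => hB.2 rfl) (toFinite _), mul_finsum_mem]
  congr 1
  refine finsum_mem_eq_of_bijOn _ h.bijOn_preimage_blocks fun B ⟨hB, hne⟩ => ?_
  rw [← Irel_restrict_mul f (h.subset_left hB hne)]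
  push_cast
  ring

theorem finsum_bldeg_sub_one [Finite V] (f : V → ℤ) :
    ∑ᶠ v, ((bldeg Γ v : ℝ) - 1) * |(f v : ℝ)| / Ienv f = |(f v₀ : ℝ)| / Ienv f +
      Irel f Λ * ∑ᶠ w : Λ,
        ((bldeg (Γ.induce Λ) w : ℝ) - 1) * |(f w : ℝ)| / Ienv (fun w : Λ => f w) := by
  classical
  set g : V → ℝ := fun v => ((bldeg Γ v : ℝ) - 1) * |(f v : ℝ)| / Ienv f
  have hterm (w : Λ) : g w = Irel f Λ * (((bldeg (Γ.induce Λ) w : ℝ) - 1) * |(f w : ℝ)| /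
      Ienv (fun w : Λ => f w)) + if (w : V) = v₀ then |(f v₀ : ℝ)| / Ienv f else 0 := by
    rw [Irel_mul_div_Ienv_restrict f w.2]
    split_ifs with hw
    · obtain ⟨v, hv⟩ := w
      subst hw
      simp only [g, h.bldeg_v₀]
      push_cast
      ring
    · simp [g, h.bldeg_eq_of_ne hw]
  calc ∑ᶠ v, g v = ∑ᶠ v ∈ Λ, g v := by
        rw [← finsum_mem_univ g]
        refine finsum_mem_inter_support_eq' g _ _ fun v hv => iff_of_true (mem_univ v) ?_
        by_contra hvΛ
        exact hv (by simp [g, h.bldeg_eq_one hvΛ])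
    _ = ∑ᶠ w : Λ, g w := (finsum_set_coe_eq_finsum_mem Λ).symm
    _ = _ := by
      rw [finsum_congr hterm, finsum_add_distrib (toFinite _) (toFinite _), ← mul_finsum,
        finsum_eq_single _ ⟨v₀, h.v₀_mem_inter.1⟩ fun w hw =>
          if_neg fun hw' => hw (Subtype.ext hw'), if_pos rfl, add_comm]

end IsLeafBlockSplit

end Graph

theorem stmt_17_general {V : Type*} [Fintype V] (Γ : SimpleGraph V)
    (f : V → ℤ)
    (Λ B₀ : Set V) (v₀ : V)
    (hB₀ : IsBlock Γ B₀)
    (hΛ : Λ = ⋃₀ {B : Set V | IsBlock Γ B ∧ B ≠ B₀})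
    (hmeet : Λ ∩ B₀ = {v₀}) :
    mval Γ f =
      (1 - ((Irel f Λ : ℝ) + (Irel f B₀ : ℝ)) + |(f v₀ : ℝ)| / (Ienv f : ℝ))
        + (Irel f Λ : ℝ) * mval (Γ.induce Λ) (fun v => f v.1) := by
  have h : IsLeafBlockSplit Γ Λ B₀ v₀ := ⟨hB₀, hΛ, hmeet⟩
  rw [mval, mval, h.finsum_Irel_blocks f, h.finsum_bldeg_sub_one f]
  ring

/-- Let Γ be a finite connected graph, f : V(Γ) → ℤ nonzero on cut vertices,
and suppose Γ = Λ ∪ B₀ where B₀ is a block containing a unique cut vertex v₀ and Λ is the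
union of all the other blocks, with Λ ∩ B₀ = {v₀}.  Then
`m(Γ,f) = b₁ + I_{Γ,Λ}·m(Λ,f)` where `b₁ = 1 − (I_{Γ,Λ} + I_{Γ,B₀}) + |f(v₀)|/I_Γ`,
and `m(Λ,f)` is computed in the induced graph on Λ. -/
theorem stmt_17 {V : Type*} [Fintype V] (Γ : SimpleGraph V) (hconn : Γ.Connected)
    (f : V → ℤ) (hf : ∀ v : V, IsCutVertex Γ v → f v ≠ 0)
    (Λ B₀ : Set V) (v₀ : V)
    (hB₀ : IsBlock Γ B₀)
    (hv₀B : v₀ ∈ B₀) (hv₀cut : IsCutVertex Γ v₀)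
    (huniq : ∀ w ∈ B₀, IsCutVertex Γ w → w = v₀)
    (hΛ : Λ = ⋃₀ {B : Set V | IsBlock Γ B ∧ B ≠ B₀})
    (hcover : Λ ∪ B₀ = Set.univ) (hmeet : Λ ∩ B₀ = {v₀}) :
    mval Γ f =
      (1 - ((Irel f Λ : ℝ) + (Irel f B₀ : ℝ)) + |(f v₀ : ℝ)| / (Ienv f : ℝ))
        + (Irel f Λ : ℝ) * mval (Γ.induce Λ) (fun v => f v.1) :=
  stmt_17_general Γ f Λ B₀ v₀ hB₀ hΛ hmeet
end
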